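/- The per-region goodput attains a global maximum at a strictly positive rate: there exists r* > 0 such that G(r*) > 0 and G(r*) ≥ G(r) for all r ≥ 0, where G(r) = r·∫_φ^{φ'} f(γ)·(1 − Ω(γ, r)) dγ (note G(0) = 0, G(r) > 0 for every r > 0, and G(r) → 0 as r → ∞). -/

import Mathlib

open MeasureTheory intervalIntegral Real Filter Topology

/-- Gaussian Q-function: Q(t) = (1/√(2π)) ∫_t^∞ exp(−u²/2) du. -/
noncomputable def Qfun (t : ℝ) : ℝ :=
  (Real.sqrt (2 * Real.pi))⁻¹ * ∫ u in Set.Ioi t, Real.exp (-u ^ 2 / 2)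

/-- Capacity C(γ) = log(1 + P γ) (natural log). -/
noncomputable def Cap (P γ : ℝ) : ℝ := Real.log (1 + P * γ)

/-- Channel dispersion V(γ) = 1 − 1/(1 + P γ)². -/
noncomputable def Vdisp (P γ : ℝ) : ℝ := 1 - 1 / (1 + P * γ) ^ 2

/-- Codeword error probability Ω(γ, r) = Q((C(γ) − r)·√(n/V(γ))). -/
noncomputable def Omega (n P γ r : ℝ) : ℝ :=
  Qfun ((Cap P γ - r) * Real.sqrt (n / Vdisp P γ))

/-- H(γ, r) = −(1/√(2π))·exp(−n(C(γ)−r)²/(2V(γ)))·f(γ)·√(n/V(γ)). -/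
noncomputable def Hfun (n P : ℝ) (f : ℝ → ℝ) (γ r : ℝ) : ℝ :=
  -(Real.sqrt (2 * Real.pi))⁻¹ * Real.exp (-(n * (Cap P γ - r) ^ 2) / (2 * Vdisp P γ)) *
    f γ * Real.sqrt (n / Vdisp P γ)

/-!
The integrand is positive, so `G r` has the sign of `r`, and `G` is continuous by dominated
convergence. Since `1 - Q` is the distribution function of the standard Gaussian, the Chernoff
bound gives `1 - Q t ≤ exp (t + 1/2)`; for `r ≥ C(φ')` this makes `1 - Ω(γ, r)` decay like
`exp (-√n r)` uniformly on the region, hence `G r → 0`. Thus `G ≤ G 1` outside a compact set,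
and a continuous function with this property attains its maximum, necessarily at some `r > 0`.
-/

open ProbabilityTheory Set
open scoped Interval

lemma Qfun_eq_gaussianReal (t : ℝ) : Qfun t = (gaussianReal 0 1).real (Ioi t) := by
  have hpdf_nonneg : 0 ≤ ∫ x in Ioi t, gaussianPDFReal 0 1 x :=
    setIntegral_nonneg measurableSet_Ioi fun x _ ↦ gaussianPDFReal_nonneg 0 1 x
  rw [measureReal_def, gaussianReal_apply_eq_integral 0 one_ne_zero,
    ENNReal.toReal_ofReal hpdf_nonneg, Qfun, ← MeasureTheory.integral_const_mul]
  simp [gaussianPDFReal]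

lemma one_sub_Qfun_eq_gaussianReal (t : ℝ) : 1 - Qfun t = (gaussianReal 0 1).real (Iic t) := by
  rw [Qfun_eq_gaussianReal, ← compl_Iic, probReal_compl_eq_one_sub measurableSet_Iic,
    sub_sub_cancel]

lemma one_sub_Qfun_pos (t : ℝ) : 0 < 1 - Qfun t := by
  rw [one_sub_Qfun_eq_gaussianReal, measureReal_def]
  refine ENNReal.toReal_pos ?_ (measure_ne_top _ _)
  exact mt (@gaussianReal_absolutelyContinuous' 0 1 one_ne_zero (Iic t)) (by simp)

lemma Qfun_nonneg (t : ℝ) : 0 ≤ Qfun t := by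
  rw [Qfun_eq_gaussianReal]; exact measureReal_nonneg

lemma one_sub_Qfun_le_exp (t : ℝ) : 1 - Qfun t ≤ exp (t + 1 / 2) := by
  -- Chernoff bound at parameter `-1`; the standard Gaussian has mgf `s ↦ exp (s ^ 2 / 2)`.
  have h := measure_le_le_exp_mul_mgf (X := id) (μ := gaussianReal 0 1) t (t := -1) (by norm_num)
    (integrable_exp_mul_gaussianReal (-1))
  rw [mgf_id_gaussianReal, ← exp_add] at h
  rw [one_sub_Qfun_eq_gaussianReal]
  exact h.trans_eq (by norm_num)

theorem MeasureTheory.Integrable.continuous_primitive_Ioi {E : Type*} [NormedAddCommGroup E]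
    [NormedSpace ℝ E] {μ : Measure ℝ} [NullSingletonClass μ] {g : ℝ → E} (hg : Integrable g μ) :
    Continuous fun t ↦ ∫ x in Ioi t, g x ∂μ :=
  continuous_iff_continuousAt.2 fun t ↦
    (hg.integrableOn.continuousOn_Ici_primitive_Ioi (a₀ := t - 1)).continuousAt
      (Ici_mem_nhds (by linarith))

lemma continuous_Qfun : Continuous Qfun := by
  have hg : Integrable fun u : ℝ ↦ exp (-u ^ 2 / 2) := by
    simpa [div_eq_inv_mul, neg_mul] using integrable_exp_neg_mul_sq (b := 1 / 2) (by norm_num)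
  exact continuous_const.mul hg.continuous_primitive_Ioi

lemma Vdisp_pos {P γ : ℝ} (hP : 0 < P) (hγ : 0 < γ) : 0 < Vdisp P γ := by
  have h : 1 < 1 + P * γ := lt_add_of_pos_right 1 (mul_pos hP hγ)
  rw [Vdisp, sub_pos, div_lt_one (by positivity)]
  exact one_lt_pow₀ h two_ne_zero

lemma Vdisp_le_one (P γ : ℝ) : Vdisp P γ ≤ 1 := by
  rw [Vdisp]
  linarith [show 0 ≤ 1 / (1 + P * γ) ^ 2 by positivity]

lemma Cap_le_Cap {P γ γ' : ℝ} (hP : 0 ≤ P) (hγ : 0 ≤ γ) (hγγ' : γ ≤ γ') :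
    Cap P γ ≤ Cap P γ' :=
  log_le_log (by positivity) (by gcongr)

lemma one_sub_Omega_le_exp {n P γ r C : ℝ} (hn : 0 ≤ n) (hP : 0 < P) (hγ : 0 < γ)
    (hC : Cap P γ ≤ C) (hCr : C ≤ r) : 1 - Omega n P γ r ≤ exp ((C - r) * √n + 1 / 2) := by
  have hsqrt : √n ≤ √(n / Vdisp P γ) :=
    sqrt_le_sqrt (le_div_self hn (Vdisp_pos hP hγ) (Vdisp_le_one P γ))
  calc 1 - Omega n P γ r ≤ exp ((Cap P γ - r) * √(n / Vdisp P γ) + 1 / 2) :=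
        one_sub_Qfun_le_exp _
    _ ≤ exp ((C - r) * √n + 1 / 2) := by
        have h : (Cap P γ - r) * √(n / Vdisp P γ) ≤ (Cap P γ - r) * √n :=
          mul_le_mul_of_nonpos_left hsqrt (by linarith)
        exact exp_le_exp.2 (add_le_add_left (h.trans (by gcongr)) _)

lemma one_sub_Omega_pos (n P γ r : ℝ) : 0 < 1 - Omega n P γ r :=
  one_sub_Qfun_pos _

lemma norm_mul_one_sub_Omega_le (n P γ r x : ℝ) : ‖x * (1 - Omega n P γ r)‖ ≤ ‖x‖ := by
  rw [norm_mul, norm_of_nonneg (one_sub_Omega_pos n P γ r).le]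
  exact mul_le_of_le_one_right (norm_nonneg x) (sub_le_self 1 (Qfun_nonneg _))

lemma measurable_Omega (n P r : ℝ) : Measurable fun γ ↦ Omega n P γ r := by
  have := continuous_Qfun.measurable
  unfold Omega Cap Vdisp
  fun_prop

lemma continuous_Omega (n P γ : ℝ) : Continuous fun r ↦ Omega n P γ r := by
  have := continuous_Qfun
  unfold Omega
  fun_prop

noncomputable def goodput (n P : ℝ) (f : ℝ → ℝ) (φ φ' r : ℝ) : ℝ :=
  r * ∫ γ in φ..φ', f γ * (1 - Omega n P γ r)

section Goodput

variable {n P : ℝ} {f : ℝ → ℝ} {φ φ' : ℝ}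

lemma aestronglyMeasurable_mul_one_sub_Omega (hf : IntervalIntegrable f volume φ φ') (r : ℝ) :
    AEStronglyMeasurable (fun γ ↦ f γ * (1 - Omega n P γ r)) (volume.restrict (Ι φ φ')) :=
  hf.def'.aestronglyMeasurable.mul
    (measurable_const.sub (measurable_Omega n P r)).aestronglyMeasurable

lemma intervalIntegrable_mul_one_sub_Omega (hf : IntervalIntegrable f volume φ φ') (r : ℝ) :
    IntervalIntegrable (fun γ ↦ f γ * (1 - Omega n P γ r)) volume φ φ' :=
  hf.mono_fun (aestronglyMeasurable_mul_one_sub_Omega hf r)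
    (ae_of_all _ fun γ ↦ norm_mul_one_sub_Omega_le n P γ r (f γ))

lemma continuous_goodput (hf : IntervalIntegrable f volume φ φ') :
    Continuous (goodput n P f φ φ') :=
  continuous_id.mul <| continuous_of_dominated_interval
    (aestronglyMeasurable_mul_one_sub_Omega hf)
    (fun r ↦ ae_of_all _ fun γ _ ↦ norm_mul_one_sub_Omega_le n P γ r (f γ)) hf.norm
    (ae_of_all _ fun γ _ ↦ continuous_const.mul (continuous_const.sub (continuous_Omega n P γ)))

lemma goodput_pos_iff (hf : IntervalIntegrable f volume φ φ') (hφφ' : φ < φ')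
    (hfpos : ∀ γ ∈ Ioo φ φ', 0 < f γ) {r : ℝ} : 0 < goodput n P f φ φ' r ↔ 0 < r :=
  mul_pos_iff_of_pos_right <| intervalIntegral_pos_of_pos_on
    (intervalIntegrable_mul_one_sub_Omega hf r)
    (fun γ hγ ↦ mul_pos (hfpos γ hγ) (one_sub_Omega_pos n P γ r)) hφφ'

lemma norm_integral_mul_one_sub_Omega_le (hn : 0 ≤ n) (hP : 0 < P) (hφ : 0 < φ)
    (hφφ' : φ ≤ φ') (hf : IntervalIntegrable f volume φ φ') {r : ℝ} (hr : Cap P φ' ≤ r) :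
    ‖∫ γ in φ..φ', f γ * (1 - Omega n P γ r)‖ ≤
      (∫ γ in φ..φ', ‖f γ‖) * exp ((Cap P φ' - r) * √n + 1 / 2) := by
  rw [← intervalIntegral.integral_mul_const]
  refine intervalIntegral.norm_integral_le_of_norm_le hφφ' (ae_of_all _ fun γ hγ ↦ ?_)
    (hf.norm.mul_const _)
  have hγ₀ : 0 < γ := hφ.trans hγ.1
  rw [norm_mul, norm_of_nonneg (one_sub_Omega_pos n P γ r).le]
  exact mul_le_mul_of_nonneg_left
    (one_sub_Omega_le_exp hn hP hγ₀ (Cap_le_Cap hP.le hγ₀.le hγ.2) hr) (norm_nonneg _)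

lemma tendsto_goodput_atTop (hn : 0 < n) (hP : 0 < P) (hφ : 0 < φ) (hφφ' : φ ≤ φ')
    (hf : IntervalIntegrable f volume φ φ') :
    Tendsto (goodput n P f φ φ') atTop (𝓝 0) := by
  set K := (∫ γ in φ..φ', ‖f γ‖) * exp (Cap P φ' * √n + 1 / 2)
  have hdecay : Tendsto (fun r ↦ K * (r * exp (-√n * r))) atTop (𝓝 0) := by
    simpa using (tendsto_rpow_mul_exp_neg_mul_atTop_nhds_zero 1 (√n) (sqrt_pos.2 hn)).const_mul K
  refine squeeze_zero_norm' ?_ hdecay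
  filter_upwards [eventually_ge_atTop (Cap P φ'), eventually_ge_atTop 0] with r hCr hr
  rw [goodput, norm_mul, norm_of_nonneg hr]
  calc r * ‖∫ γ in φ..φ', f γ * (1 - Omega n P γ r)‖
      ≤ r * ((∫ γ in φ..φ', ‖f γ‖) * exp ((Cap P φ' - r) * √n + 1 / 2)) := by
        gcongr
        exact norm_integral_mul_one_sub_Omega_le hn.le hP hφ hφφ' hf hCr
    _ = K * (r * exp (-√n * r)) := by
        rw [show (Cap P φ' - r) * √n + 1 / 2 = Cap P φ' * √n + 1 / 2 + -√n * r by ring, exp_add]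
        ring

end Goodput

theorem goodput_attains_max (n P : ℝ) (hn : 0 < n) (hP : 0 < P)
    (f : ℝ → ℝ) (hf : Continuous f) (hfpos : ∀ γ : ℝ, 0 < γ → 0 < f γ)
    (φ φ' : ℝ) (hφ : 0 < φ) (hφφ' : φ < φ') :
    ∃ rstar : ℝ, 0 < rstar ∧
      0 < rstar * (∫ γ in φ..φ', f γ * (1 - Omega n P γ rstar)) ∧
      ∀ r : ℝ, 0 ≤ r →
        r * (∫ γ in φ..φ', f γ * (1 - Omega n P γ r)) ≤
          rstar * (∫ γ in φ..φ', f γ * (1 - Omega n P γ rstar)) := by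
  set G := goodput n P f φ φ'
  have hfi : IntervalIntegrable f volume φ φ' := hf.intervalIntegrable φ φ'
  have hG_pos_iff (r : ℝ) : 0 < G r ↔ 0 < r :=
    goodput_pos_iff hfi hφφ' fun γ hγ ↦ hfpos γ (hφ.trans hγ.1)
  have hG1 : 0 < G 1 := (hG_pos_iff 1).2 one_pos
  have hG_le_G1 : ∀ᶠ r in cocompact ℝ, G r ≤ G 1 := by
    rw [cocompact_eq_atBot_atTop, eventually_sup]
    constructor
    · filter_upwards [eventually_le_atBot 0] with r hr
      exact (le_of_not_gt (mt (hG_pos_iff r).1 hr.not_gt)).trans hG1.le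
    · exact (tendsto_goodput_atTop hn hP hφ hφφ'.le hfi).eventually (ge_mem_nhds hG1)
  obtain ⟨rstar, hmax⟩ := (continuous_goodput hfi).exists_forall_ge' 1 hG_le_G1
  have hGstar : 0 < G rstar := hG1.trans_le (hmax 1)
  exact ⟨rstar, (hG_pos_iff rstar).1 hGstar, hGstar, fun r _ ↦ hmax r⟩
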